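/- If α and β are order-n ribbon tilings of a simply connected region R such that G_R(α) = G_R(β) as orientations of G_R (that is, t_{c,i}(α) ≺ t_{d,j}(α) if and only if t_{c,i}(β) ≺ t_{d,j}(β) for all pairs of tile indices, and similarly for all edges involving boundary squares), then α = β. -/

import Mathlib

/-- A square of the grid, indexed by its `(x, y)` coordinates. -/
abbrev Square : Type := ℤ × ℤ

/-- Two squares are adjacent if they share an edge. -/
def SqAdj (s t : Square) : Prop :=
  (s.1 = t.1 ∧ (s.2 = t.2 + 1 ∨ s.2 + 1 = t.2)) ∨
  (s.2 = t.2 ∧ (s.1 = t.1 + 1 ∨ s.1 + 1 = t.1))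

/-- A set of squares is connected with respect to edge-adjacency. -/
def ConnOn (S : Set Square) : Prop :=
  ∀ a ∈ S, ∀ b ∈ S, Relation.ReflTransGen (fun x y => x ∈ S ∧ y ∈ S ∧ SqAdj x y) a b

/-- Winding number of a sequence of squares around the square `p`: the signed
number of crossings of the upward vertical ray above (the center of) `p`;
a leftward horizontal move strictly above `p` counts `+1`, so that a
counterclockwise loop around `p` has winding number `+1`. -/
def sqWinding (p : Square) (L : List Square) : ℤ :=
  ((L.zip L.tail).map (fun ab : Square × Square =>
    if ab.1.2 = ab.2.2 ∧ p.2 < ab.1.2 ∧ ab.1.1 = p.1 + 1 ∧ ab.2.1 = p.1 then (1 : ℤ)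
    else if ab.1.2 = ab.2.2 ∧ p.2 < ab.1.2 ∧ ab.1.1 = p.1 ∧ ab.2.1 = p.1 + 1 then (-1 : ℤ)
    else 0)).sum

/-- A closed cycle of squares all lying in `S`. -/
def SqLoopIn (S : Set Square) (L : List Square) : Prop :=
  L ≠ [] ∧ (∀ s ∈ L, s ∈ S) ∧ L.Chain' SqAdj ∧ L.head? = L.getLast?

/-- A set of squares is simply connected if no cycle of squares in it encircles
a square outside of it with nonzero winding number. -/
def SimplyConnectedSq (S : Set Square) : Prop :=
  ∀ p : Square, p ∉ S → ∀ L : List Square, SqLoopIn S L → sqWinding p L = 0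

/-- A region: a finite, nonempty, connected set of squares. -/
def IsRegion (R : Finset Square) : Prop := R.Nonempty ∧ ConnOn ↑R

/-- A ribbon tile of order `n`: a connected set of `n` squares containing
exactly one square of each color `c`, where the square `(x, y)` has color
`(x + y) mod n`. -/
def IsRibbonTile (n : ℕ) (t : Finset Square) : Prop :=
  ConnOn ↑t ∧ t.card = n ∧
  ∀ c : ℤ, 0 ≤ c → c < n → ∃! s, s ∈ t ∧ (s.1 + s.2) % n = c

/-- An order-`n` ribbon tiling of `R`: a partition of `R` into order-`n`
ribbon tiles. -/
def IsRibbonTiling (n : ℕ) (R : Finset Square) (α : Finset (Finset Square)) : Prop :=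
  (∀ t ∈ α, IsRibbonTile n t) ∧ (∀ t ∈ α, t ⊆ R) ∧
  (∀ s ∈ R, ∃! t, t ∈ α ∧ s ∈ t)

/-- Two tilings differ by a local replacement move: one is obtained from the
other by removing a single pair of tiles and adding a different pair of tiles
covering the same squares. -/
def LocalMove (α β : Finset (Finset Square)) : Prop :=
  ∃ t₁ t₂ u₁ u₂ : Finset Square, t₁ ∈ α ∧ t₂ ∈ α ∧ t₁ ≠ t₂ ∧ u₁ ≠ u₂ ∧
    ({t₁, t₂} : Finset (Finset Square)) ≠ {u₁, u₂} ∧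
    t₁ ∪ t₂ = u₁ ∪ u₂ ∧
    β = (α \ {t₁, t₂}) ∪ {u₁, u₂}

/-- The "left of" relation on squares: `s` is directly left (same level,
smaller `x`) or indirectly left (levels differing by one, `x ≤ x'`, `y ≥ y'`)
of `s'`. -/
def sqPrec (s t : Square) : Prop :=
  (s.1 + s.2 = t.1 + t.2 ∧ s.1 < t.1) ∨
  (|s.1 + s.2 - (t.1 + t.2)| = 1 ∧ s.1 ≤ t.1 ∧ t.2 ≤ s.2)

/-- The "left of" relation for (sets of) squares: `t₁ ≺ t₂` if some square of
`t₁` is left of some square of `t₂`.  A single square `s` is treated as the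
singleton `{s}`. -/
def TilePrec (t₁ t₂ : Finset Square) : Prop :=
  ∃ s₁ ∈ t₁, ∃ s₂ ∈ t₂, sqPrec s₁ s₂

/-- The boundary `B_R` of a region: squares not in `R` adjacent to a square
of `R`. -/
def boundarySet (R : Finset Square) : Set Square :=
  {s | s ∉ R ∧ ∃ r ∈ R, SqAdj s r}

/-- The level of a tile: the level `x + y` of its lowest square. -/
def tileLevel (t : Finset Square) : ℤ := ((t.image fun s : Square => s.1 + s.2).min).untopD 0

/-- `IsNthTile α c i t`: `t` is the tile `t_{c,i}(α)`, i.e. the `i`-th tile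
(0-indexed, from left to right with respect to `≺`) of level `c` in the
tiling `α`. -/
def IsNthTile (α : Finset (Finset Square)) (c : ℤ) (i : ℕ) (t : Finset Square) : Prop :=
  t ∈ α ∧ tileLevel t = c ∧
  {t' : Finset Square | t' ∈ α ∧ t' ≠ t ∧ tileLevel t' = c ∧ TilePrec t' t}.ncard = i

/-!
Every ribbon tile is a staircase: one square on each of `n` consecutive levels, each square one
step right of or above the previous one. Label every square of `R` by the index `(c, i)` of its
tile `t_{c,i}`; the labels determine the tiling. The labels of `α` and `β` agree, by induction
over the squares, lower levels first and from left to right within a level. Counting squares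
level by level, both tilings have the same number of tiles of each level, and the rank of a tile
within its level counts the lowest squares of tiles to its left; this settles a square that is
lowest in both of its tiles. A square entered from the left in one tiling is settled by the
induction hypothesis. In the remaining case the square `s` is entered from below in `α` and is
lowest in its `β`-tile `u`; then the `β`-tile labelled like the `α`-tile `t` of `s` passes just
right of `s`, so it lies right of `u`, whereas the `α`-tile labelled like `u` lies right of `t`,
contradicting the equal orientations.
-/

open Finset

lemma sqPrec_iff {s t : Square} : sqPrec s t ↔
    ((t.1 + t.2 = s.1 + s.2 ∨ t.1 + t.2 = s.1 + s.2 + 1) ∧ s.1 < t.1) ∨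
    (t.1 + t.2 = s.1 + s.2 - 1 ∧ s.1 ≤ t.1) := by
  unfold sqPrec
  rw [abs_eq zero_le_one]
  omega

lemma exists_sqAdj_level_crossing {S : Set Square} {a b : Square}
    (hab : Relation.ReflTransGen (fun x y => x ∈ S ∧ y ∈ S ∧ SqAdj x y) a b) {m : ℤ}
    (ha : a.1 + a.2 ≤ m) (hb : m < b.1 + b.2) :
    ∃ p ∈ S, ∃ q ∈ S, SqAdj p q ∧ p.1 + p.2 = m ∧ q.1 + q.2 = m + 1 := by
  induction hab with
  | refl => omega
  | @tail b c _ hbc ih =>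
    obtain ⟨hb', hc, hadj⟩ := hbc
    by_cases hbm : m < b.1 + b.2
    · exact ih hbm
    · refine ⟨b, hb', c, hc, hadj, ?_⟩
      unfold SqAdj at hadj
      omega

/-- `t` is the staircase `{(g m, m - g m) | c ≤ m < c + n}`. -/
structure IsStaircase (n : ℕ) (t : Finset Square) (c : ℤ) (g : ℤ → ℤ) : Prop where
  mem_iff : ∀ s, s ∈ t ↔ c ≤ s.1 + s.2 ∧ s.1 + s.2 < c + n ∧ s.1 = g (s.1 + s.2)
  step : ∀ m, c ≤ m → m + 1 < c + n → g (m + 1) = g m ∨ g (m + 1) = g m + 1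

namespace IsStaircase

variable {n : ℕ} {t t' : Finset Square} {c c' : ℤ} {g g' : ℤ → ℤ} {s s' : Square}

lemma mk_mem (h : IsStaircase n t c g) {m : ℤ} (h₁ : c ≤ m) (h₂ : m < c + n) :
    (g m, m - g m) ∈ t :=
  (h.mem_iff _).2 (by simp [h₁, h₂])

lemma level_mem (h : IsStaircase n t c g) (hs : s ∈ t) :
    c ≤ s.1 + s.2 ∧ s.1 + s.2 < c + n :=
  ⟨((h.mem_iff s).1 hs).1, ((h.mem_iff s).1 hs).2.1⟩

lemma fst_eq (h : IsStaircase n t c g) (hs : s ∈ t) : s.1 = g (s.1 + s.2) :=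
  ((h.mem_iff s).1 hs).2.2

lemma eq_of_level_eq (h : IsStaircase n t c g) (hs : s ∈ t) (hs' : s' ∈ t)
    (hl : s.1 + s.2 = s'.1 + s'.2) : s = s' := by
  have h₁ := h.fst_eq hs
  have h₂ := h.fst_eq hs'
  rw [hl] at h₁
  exact Prod.ext (h₁.trans h₂.symm) (by omega)

lemma pred_mem (h : IsStaircase n t c g) (hs : s ∈ t) (hc : c < s.1 + s.2) :
    (s.1 - 1, s.2) ∈ t ∨ (s.1, s.2 - 1) ∈ t := by
  obtain ⟨-, hsn⟩ := h.level_mem hs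
  have hx := h.fst_eq hs
  have hp := h.mk_mem (m := s.1 + s.2 - 1) (by omega) (by omega)
  have hstep := h.step (s.1 + s.2 - 1) (by omega) (by omega)
  rw [sub_add_cancel, ← hx] at hstep
  rcases hstep with hstep | hstep
  · right
    convert hp using 2
    omega
  · left
    convert hp using 2 <;> omega

lemma succ_mem (h : IsStaircase n t c g) (hs : s ∈ t) (hn : s.1 + s.2 + 1 < c + n) :
    (s.1 + 1, s.2) ∈ t ∨ (s.1, s.2 + 1) ∈ t := by
  obtain ⟨hcs, -⟩ := h.level_mem hs
  have hx := h.fst_eq hs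
  have hq := h.mk_mem (m := s.1 + s.2 + 1) (by omega) hn
  rcases h.step (s.1 + s.2) hcs hn with hstep | hstep
  · right
    convert hq using 2 <;> omega
  · left
    convert hq using 2 <;> omega

lemma lt_of_disjoint (h : IsStaircase n t c g) (h' : IsStaircase n t' c' g')
    (hd : Disjoint t t') {m₀ : ℤ} (hc : c ≤ m₀) (hc' : c' ≤ m₀)
    (h₀ : g m₀ < g' m₀) :
    ∀ m, m₀ ≤ m → m < c + n → m < c' + n → g m < g' m := by
  intro m hm
  induction m, hm using Int.leInduction with
  | base => exact fun _ _ => h₀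
  | succ m hm ih =>
    intro hmn hmn'
    have hlt := ih (by omega) (by omega)
    have hne : g (m + 1) ≠ g' (m + 1) := fun heq =>
      disjoint_left.1 hd (h.mk_mem (m := m + 1) (by omega) hmn)
        (heq ▸ h'.mk_mem (m := m + 1) (by omega) hmn')
    have := h.step m (by omega) hmn
    have := h'.step m (by omega) hmn'
    omega

lemma not_tilePrec (h : IsStaircase n t c g) (h' : IsStaircase n t' c' g')
    (hd : Disjoint t t') (hc : c ≤ c') (hc' : c' < c + n) (h₀ : g c' < g' c') :
    ¬ TilePrec t' t := by
  rintro ⟨s₁, hs₁, s₂, hs₂, hp⟩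
  have hlt m (hm : c' ≤ m) (hm' : m < c + n) : g m < g' m :=
    h.lt_of_disjoint h' hd hc le_rfl h₀ m hm hm' (by omega)
  obtain ⟨hl₁, hu₁⟩ := h'.level_mem hs₁
  obtain ⟨hl₂, hu₂⟩ := h.level_mem hs₂
  have hx₁ := h'.fst_eq hs₁
  have hx₂ := h.fst_eq hs₂
  rw [sqPrec_iff] at hp
  generalize s₁.1 + s₁.2 = m at *
  rcases hp with ⟨hl | hl, hx⟩ | ⟨hl, hx⟩ <;> rw [hl] at hx₂ hu₂ hl₂ <;> clear hl
  · have := hlt m hl₁ hu₂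
    omega
  · have := hlt m hl₁ (by omega)
    have := h.step m (by omega) hu₂
    omega
  · by_cases hm : c' ≤ m - 1
    · have := hlt (m - 1) hm (by omega)
      have := h'.step (m - 1) hm (by omega)
      rw [sub_add_cancel] at this
      omega
    · have := hlt c' le_rfl hc'
      have := h.step (c' - 1) (by omega) (by omega)
      rw [sub_add_cancel] at this
      obtain rfl : m = c' := by omega
      omega

end IsStaircase

namespace IsRibbonTile

variable {n : ℕ} {t : Finset Square}

lemma injOn_level (hn : 0 < n) (ht : IsRibbonTile n t) :
    Set.InjOn (fun s : Square => s.1 + s.2) t := by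
  intro a ha b hb hab
  obtain ⟨_, -, hu⟩ := ht.2.2 ((a.1 + a.2) % n) (Int.emod_nonneg _ (by omega))
    (Int.emod_lt_of_pos _ (by omega))
  exact (hu a ⟨ha, rfl⟩).trans (hu b ⟨hb, by simp only at hab; rw [hab]⟩).symm

lemma image_level (hn : 0 < n) (ht : IsRibbonTile n t) :
    t.image (fun s : Square => s.1 + s.2) = Ico (tileLevel t) (tileLevel t + n) := by
  set L := t.image (fun s : Square => s.1 + s.2)
  have hL : L.Nonempty := (card_pos.1 (by rw [ht.2.1]; exact hn)).image _
  have hlevel : tileLevel t = L.min' hL := by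
    rw [tileLevel, ← coe_min' hL]
    rfl
  obtain ⟨a, ha, hamin⟩ := mem_image.1 (L.min'_mem hL)
  obtain ⟨b, hb, hbmax⟩ := mem_image.1 (L.max'_mem hL)
  have hIcc : L = Icc (L.min' hL) (L.max' hL) := by
    refine Subset.antisymm (fun m hm => mem_Icc.2 ⟨L.min'_le m hm, L.le_max' m hm⟩)
      fun m hm => ?_
    obtain ⟨hm₁, hm₂⟩ := mem_Icc.1 hm
    obtain rfl | hm₂ := hm₂.eq_or_lt
    · exact L.max'_mem hL
    obtain ⟨p, hp, -, -, -, hpm, -⟩ :=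
      exists_sqAdj_level_crossing (ht.1 a ha b hb) (m := m) (by omega) (by omega)
    exact mem_image.2 ⟨p, hp, hpm⟩
  have hcard : (L.max' hL + 1 - L.min' hL).toNat = n := by
    rw [← Int.card_Icc, ← hIcc, card_image_of_injOn (ht.injOn_level hn), ht.2.1]
  rw [hIcc, hlevel]
  ext m
  simp only [mem_Icc, mem_Ico]
  omega

lemma exists_isStaircase (hn : 0 < n) (ht : IsRibbonTile n t) :
    ∃ g, IsStaircase n t (tileLevel t) g := by
  obtain ⟨F, hF⟩ : ∃ F : ℤ → Square, ∀ m ∈ Ico (tileLevel t) (tileLevel t + n),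
      F m ∈ t ∧ (F m).1 + (F m).2 = m := by
    refine ⟨Function.invFunOn (fun s : Square => s.1 + s.2) t, fun m hm => ?_⟩
    rw [← ht.image_level hn] at hm
    obtain ⟨s, hs, hsm⟩ := mem_image.1 hm
    exact ⟨Function.invFunOn_mem ⟨s, hs, hsm⟩,
      Function.invFunOn_eq (f := fun s : Square => s.1 + s.2) ⟨s, hs, hsm⟩⟩
  have hinj := ht.injOn_level hn
  refine ⟨fun m => (F m).1, fun s => ⟨fun hs => ?_, fun hs => ?_⟩, fun m hm hm' => ?_⟩
  · have hm := mem_Ico.1 (ht.image_level hn ▸ mem_image_of_mem _ hs)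
    obtain ⟨hs', hFs⟩ := hF _ (mem_Ico.2 hm)
    exact ⟨hm.1, hm.2, by rw [hinj hs' hs hFs]⟩
  · obtain ⟨hs', hFs⟩ := hF (s.1 + s.2) (mem_Ico.2 ⟨hs.1, hs.2.1⟩)
    convert hs'
    exact Prod.ext hs.2.2 (by omega)
  · obtain ⟨hp, hFp⟩ := hF m (mem_Ico.2 ⟨hm, by omega⟩)
    obtain ⟨hq, hFq⟩ := hF (m + 1) (mem_Ico.2 ⟨by omega, hm'⟩)
    obtain ⟨p, hp', q, hq', hadj, hpm, hqm⟩ :=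
      exists_sqAdj_level_crossing (ht.1 _ hp _ hq) (m := m) hFp.le (by omega)
    rw [hinj hp' hp (hpm.trans hFp.symm), hinj hq' hq (hqm.trans hFq.symm)] at hadj
    unfold SqAdj at hadj
    omega

end IsRibbonTile

namespace IsRibbonTiling

variable {n : ℕ} {R : Finset Square} {γ : Finset (Finset Square)} {t t' : Finset Square}
  {s : Square}

lemma subset (hγ : IsRibbonTiling n R γ) (ht : t ∈ γ) : t ⊆ R := hγ.2.1 t ht

lemma eq_of_mem (hγ : IsRibbonTiling n R γ) (ht : t ∈ γ) (ht' : t' ∈ γ) (hs : s ∈ t)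
    (hs' : s ∈ t') : t = t' :=
  (hγ.2.2 s (hγ.subset ht hs)).unique ⟨ht, hs⟩ ⟨ht', hs'⟩

lemma disjoint (hγ : IsRibbonTiling n R γ) (ht : t ∈ γ) (ht' : t' ∈ γ) (hne : t ≠ t') :
    Disjoint t t' :=
  disjoint_left.2 fun _ hs hs' => hne (hγ.eq_of_mem ht ht' hs hs')

lemma exists_isStaircase (hγ : IsRibbonTiling n R γ) (hn : 0 < n) (ht : t ∈ γ) :
    ∃ g, IsStaircase n t (tileLevel t) g :=
  (hγ.1 t ht).exists_isStaircase hn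

end IsRibbonTiling

noncomputable def tileOf (γ : Finset (Finset Square)) (s : Square) : Finset Square :=
  if h : ∃ t ∈ γ, s ∈ t then h.choose else ∅

section Tiling

variable {n : ℕ} {R : Finset Square} {γ : Finset (Finset Square)} {t : Finset Square}
  {s : Square}

lemma tileOf_mem_and_mem (hγ : IsRibbonTiling n R γ) (hs : s ∈ R) :
    tileOf γ s ∈ γ ∧ s ∈ tileOf γ s := by
  obtain ⟨t, ht, -⟩ := hγ.2.2 s hs
  have h : ∃ t ∈ γ, s ∈ t := ⟨t, ht⟩
  rw [tileOf, dif_pos h]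
  exact h.choose_spec

lemma tileOf_mem (hγ : IsRibbonTiling n R γ) (hs : s ∈ R) : tileOf γ s ∈ γ :=
  (tileOf_mem_and_mem hγ hs).1

lemma mem_tileOf (hγ : IsRibbonTiling n R γ) (hs : s ∈ R) : s ∈ tileOf γ s :=
  (tileOf_mem_and_mem hγ hs).2

lemma tileOf_eq (hγ : IsRibbonTiling n R γ) (ht : t ∈ γ) (hs : s ∈ t) : tileOf γ s = t :=
  hγ.eq_of_mem (tileOf_mem hγ (hγ.subset ht hs)) ht (mem_tileOf hγ (hγ.subset ht hs)) hs

end Tiling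

noncomputable def rank (γ : Finset (Finset Square)) (t : Finset Square) : ℕ :=
  {t' | t' ∈ γ ∧ t' ≠ t ∧ tileLevel t' = tileLevel t ∧ TilePrec t' t}.ncard

noncomputable def tileLabel (γ : Finset (Finset Square)) (t : Finset Square) : ℤ × ℕ :=
  (tileLevel t, rank γ t)

noncomputable def label (γ : Finset (Finset Square)) (s : Square) : ℤ × ℕ :=
  tileLabel γ (tileOf γ s)

noncomputable def levelCount (γ : Finset (Finset Square)) (l : ℤ) : ℕ :=
  #{t ∈ γ | tileLevel t = l}

/-- A root is the lowest square of its tile. -/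
noncomputable def rootsLeftOf (R : Finset Square) (γ : Finset (Finset Square)) (l x : ℤ) :
    Finset Square :=
  {q ∈ R | q.1 + q.2 = l ∧ q.1 < x ∧ tileLevel (tileOf γ q) = l}

lemma isNthTile_iff {γ : Finset (Finset Square)} {c : ℤ} {i : ℕ} {t : Finset Square} :
    IsNthTile γ c i t ↔ t ∈ γ ∧ tileLabel γ t = (c, i) := by
  simp only [IsNthTile, tileLabel, rank, Prod.mk.injEq]
  constructor
  · rintro ⟨ht, rfl, rfl⟩
    exact ⟨ht, rfl, rfl⟩
  · rintro ⟨ht, rfl, rfl⟩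
    exact ⟨ht, rfl, rfl⟩

section Rank

variable {n : ℕ} {R : Finset Square} {γ : Finset (Finset Square)} {t : Finset Square}
  {l x : ℤ} {g : ℤ → ℤ} {s s' : Square}

/-- Tiles of one level are ordered by `≺` as their lowest squares are ordered from left to
right, so the rank of a tile counts the lowest squares to the left of its own. -/
lemma rank_eq_card_rootsLeftOf (hn : 0 < n) (hγ : IsRibbonTiling n R γ) (ht : t ∈ γ)
    (hl : tileLevel t = l) (h : IsStaircase n t l g) :
    rank γ t = #(rootsLeftOf R γ l (g l)) := by
  have hroot : (g l, l - g l) ∈ t := h.mk_mem le_rfl (by omega)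
  rw [rank, hl, ← Set.ncard_coe_finset]
  symm
  refine Set.ncard_congr (fun q _ => tileOf γ q) (fun q hq => ?_) (fun q q' hq hq' heq => ?_)
    fun t' ht' => ?_
  · simp only [rootsLeftOf, coe_filter, Set.mem_ofPred_eq] at hq ⊢
    obtain ⟨hqR, hql, hqx, hqt⟩ := hq
    refine ⟨tileOf_mem hγ hqR, fun heq => ?_, hqt, q, mem_tileOf hγ hqR, _, hroot,
      Or.inl ⟨by dsimp only; omega, hqx⟩⟩
    have := h.fst_eq (heq ▸ mem_tileOf hγ hqR)
    rw [hql] at this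
    omega
  · simp only [rootsLeftOf, coe_filter, Set.mem_ofPred_eq] at hq hq'
    obtain ⟨g', h'⟩ := hγ.exists_isStaircase hn (tileOf_mem hγ hq.1)
    exact h'.eq_of_level_eq (mem_tileOf hγ hq.1) (heq ▸ mem_tileOf hγ hq'.1)
      (hq.2.1.trans hq'.2.1.symm)
  · obtain ⟨ht', hne, hl', hprec⟩ := ht'
    obtain ⟨g', h'⟩ := hγ.exists_isStaircase hn ht'
    rw [hl'] at h'
    have hroot' : (g' l, l - g' l) ∈ t' := h'.mk_mem le_rfl (by omega)
    refine ⟨_, ?_, tileOf_eq hγ ht' hroot'⟩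
    have hlt : g' l < g l := by
      rcases lt_trichotomy (g' l) (g l) with hlt | heq | hgt
      · exact hlt
      · exact absurd (hγ.eq_of_mem ht' ht hroot' (heq ▸ hroot)) hne
      · exact absurd hprec (h.not_tilePrec h' (hγ.disjoint ht ht' (Ne.symm hne)) le_rfl
          (by omega) hgt)
    simp [rootsLeftOf, hγ.subset ht' hroot', hlt, tileOf_eq hγ ht' hroot', hl']

lemma card_rootsLeftOf_lt (hn : 0 < n) (hγ : IsRibbonTiling n R γ) (ht : t ∈ γ)
    (hl : tileLevel t = l) (h : IsStaircase n t l g) (hx : g l < x) :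
    #(rootsLeftOf R γ l (g l)) < #(rootsLeftOf R γ l x) := by
  have hroot : (g l, l - g l) ∈ t := h.mk_mem le_rfl (by omega)
  refine card_lt_card ((ssubset_iff_of_subset fun q hq => ?_).2 ⟨(g l, l - g l), ?_, ?_⟩)
  · simp only [rootsLeftOf, mem_filter] at hq ⊢
    exact ⟨hq.1, hq.2.1, hq.2.2.1.trans hx, hq.2.2.2⟩
  · simp [rootsLeftOf, hγ.subset ht hroot, hx, tileOf_eq hγ ht hroot, hl]
  · simp [rootsLeftOf]

lemma tileLabel_injOn (hn : 0 < n) (hγ : IsRibbonTiling n R γ) : Set.InjOn (tileLabel γ) γ := by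
  intro t₁ ht₁ t₂ ht₂ heq
  obtain ⟨hl, hr⟩ := Prod.ext_iff.1 heq
  simp only [tileLabel] at hl hr
  obtain ⟨g₁, h₁⟩ := hγ.exists_isStaircase hn ht₁
  obtain ⟨g₂, h₂⟩ := hγ.exists_isStaircase hn ht₂
  rw [hl] at h₁
  have hrank₁ := rank_eq_card_rootsLeftOf hn hγ ht₁ hl h₁
  have hrank₂ := rank_eq_card_rootsLeftOf hn hγ ht₂ rfl h₂
  rcases lt_trichotomy (g₁ (tileLevel t₂)) (g₂ (tileLevel t₂)) with hlt | heq | hgt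
  · have := card_rootsLeftOf_lt hn hγ ht₁ hl h₁ hlt
    omega
  · exact hγ.eq_of_mem ht₁ ht₂ (h₁.mk_mem le_rfl (by omega))
      (heq ▸ h₂.mk_mem le_rfl (by omega))
  · have := card_rootsLeftOf_lt hn hγ ht₂ rfl h₂ hgt
    omega

lemma rank_lt_levelCount (ht : t ∈ γ) : rank γ t < levelCount γ (tileLevel t) := by
  rw [rank, levelCount, ← Set.ncard_coe_finset]
  refine Set.ncard_lt_ncard ((Set.ssubset_iff_of_subset fun t' ht' => ?_).2 ⟨t, ?_, ?_⟩)
  · simpa using ⟨ht'.1, ht'.2.2.1⟩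
  · simpa using ht
  · exact fun h => h.2.1 rfl

lemma exists_tileLabel_eq (hn : 0 < n) (hγ : IsRibbonTiling n R γ) {j : ℕ}
    (hj : j < levelCount γ l) : ∃ t ∈ γ, tileLabel γ t = (l, j) := by
  obtain ⟨t, ht, hjt⟩ := surj_on_of_inj_on_of_card_le (s := {t ∈ γ | tileLevel t = l})
    (t := range (levelCount γ l)) (fun t _ => rank γ t)
    (fun t ht => mem_range.2 ((mem_filter.1 ht).2 ▸ rank_lt_levelCount (mem_filter.1 ht).1))
    (fun t₁ t₂ ht₁ ht₂ h =>
      tileLabel_injOn hn hγ (mem_filter.1 ht₁).1 (mem_filter.1 ht₂).1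
      (Prod.ext ((mem_filter.1 ht₁).2.trans (mem_filter.1 ht₂).2.symm) h))
    (by rw [card_range, levelCount]) j (mem_range.2 hj)
  exact ⟨t, (mem_filter.1 ht).1, Prod.ext (mem_filter.1 ht).2 hjt.symm⟩

lemma card_level_eq_sum_levelCount (hn : 0 < n) (hγ : IsRibbonTiling n R γ) (m : ℤ) :
    #{s ∈ R | s.1 + s.2 = m} = ∑ c ∈ Ioc (m - n) m, levelCount γ c := by
  simp only [levelCount]
  rw [sum_card_fiberwise_eq_card_filter]
  refine card_bij (fun s _ => tileOf γ s) (fun s hs => ?_) (fun s hs s' hs' heq => ?_)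
    fun t ht => ?_
  · obtain ⟨hsR, rfl⟩ := mem_filter.1 hs
    obtain ⟨g, h⟩ := hγ.exists_isStaircase hn (tileOf_mem hγ hsR)
    have := h.level_mem (mem_tileOf hγ hsR)
    simp only [mem_filter, mem_Ioc, tileOf_mem hγ hsR, true_and]
    omega
  · obtain ⟨hsR, hsm⟩ := mem_filter.1 hs
    obtain ⟨hs'R, hs'm⟩ := mem_filter.1 hs'
    obtain ⟨g, h⟩ := hγ.exists_isStaircase hn (tileOf_mem hγ hsR)
    exact h.eq_of_level_eq (mem_tileOf hγ hsR) (heq ▸ mem_tileOf hγ hs'R) (hsm.trans hs'm.symm)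
  · obtain ⟨ht, hl⟩ := mem_filter.1 ht
    rw [mem_Ioc] at hl
    obtain ⟨g, h⟩ := hγ.exists_isStaircase hn ht
    have hsq := h.mk_mem (m := m) (by omega) (by omega)
    exact ⟨_, mem_filter.2 ⟨hγ.subset ht hsq, by simp⟩, tileOf_eq hγ ht hsq⟩

/-- Level by level from the bottom, the number of squares of `R` on level `m` determines the
number of tiles of level `m`, once those of the `n - 1` levels below are known. -/
lemma levelCount_eq (hn : 0 < n) {δ : Finset (Finset Square)} (hγ : IsRibbonTiling n R γ)
    (hδ : IsRibbonTiling n R δ) (m : ℤ) : levelCount γ m = levelCount δ m := by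
  obtain ⟨m₀, hm₀⟩ := (R.image fun s : Square => s.1 + s.2).bddBelow
  have hbelow {γ'} (hγ' : IsRibbonTiling n R γ') (k : ℤ) (hk : k < m₀) :
      levelCount γ' k = 0 := by
    refine card_eq_zero.2 (filter_eq_empty_iff.2 fun t ht hl => ?_)
    obtain ⟨g, h⟩ := hγ'.exists_isStaircase hn ht
    have hsq := hγ'.subset ht (h.mk_mem le_rfl (by omega))
    have := hm₀ (mem_image_of_mem _ hsq)
    simp only [add_sub_cancel] at this
    omega
  suffices ∀ m', m₀ - 1 ≤ m' → ∀ k ≤ m', levelCount γ k = levelCount δ k from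
    this _ (le_max_right m (m₀ - 1)) m (le_max_left _ _)
  intro m' hm'
  induction m', hm' using Int.leInduction with
  | base => exact fun k hk => by rw [hbelow hγ k (by omega), hbelow hδ k (by omega)]
  | succ m' _ ih =>
    intro k hk
    obtain hk | rfl := hk.lt_or_eq
    · exact ih k (by omega)
    have hsplit : Ioc (m' + 1 - n) (m' + 1) = insert (m' + 1) (Ioc (m' + 1 - n) m') := by
      ext
      simp only [mem_Ioc, mem_insert]
      omega
    have hγs := card_level_eq_sum_levelCount hn hγ (m' + 1)
    have hδs := card_level_eq_sum_levelCount hn hδ (m' + 1)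
    rw [hsplit, sum_insert (by simp)] at hγs hδs
    have hsum : ∑ c ∈ Ioc (m' + 1 - n) m', levelCount γ c =
        ∑ c ∈ Ioc (m' + 1 - n) m', levelCount δ c :=
      sum_congr rfl fun c hc => ih c (mem_Ioc.1 hc).2
    omega

lemma label_eq_label (hγ : IsRibbonTiling n R γ) (ht : t ∈ γ) (hs : s ∈ t) (hs' : s' ∈ t) :
    label γ s = label γ s' := by
  rw [label, label, tileOf_eq hγ ht hs, tileOf_eq hγ ht hs']

lemma tileOf_eq_of_label_eq (hn : 0 < n) (hγ : IsRibbonTiling n R γ) (hs : s ∈ R)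
    (hs' : s' ∈ R) (h : label γ s = label γ s') : tileOf γ s = tileOf γ s' :=
  tileLabel_injOn hn hγ (tileOf_mem hγ hs) (tileOf_mem hγ hs') h

lemma rank_tileOf_eq_card_rootsLeftOf (hn : 0 < n) (hγ : IsRibbonTiling n R γ) (hs : s ∈ R)
    (hroot : tileLevel (tileOf γ s) = s.1 + s.2) :
    rank γ (tileOf γ s) = #(rootsLeftOf R γ (s.1 + s.2) s.1) := by
  obtain ⟨g, h⟩ := hγ.exists_isStaircase hn (tileOf_mem hγ hs)
  rw [hroot] at h
  rw [rank_eq_card_rootsLeftOf hn hγ (tileOf_mem hγ hs) hroot h, ← h.fst_eq (mem_tileOf hγ hs)]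

lemma root_or_pred_mem_tileOf (hn : 0 < n) (hγ : IsRibbonTiling n R γ) (hs : s ∈ R) :
    tileLevel (tileOf γ s) = s.1 + s.2 ∨ (s.1 - 1, s.2) ∈ tileOf γ s ∨
      (s.1, s.2 - 1) ∈ tileOf γ s := by
  obtain ⟨g, h⟩ := hγ.exists_isStaircase hn (tileOf_mem hγ hs)
  obtain ⟨hle, -⟩ := h.level_mem (mem_tileOf hγ hs)
  rcases hle.eq_or_lt with heq | hlt
  · exact Or.inl heq
  · exact Or.inr (h.pred_mem (mem_tileOf hγ hs) hlt)

end Rank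

def SameOrientation (γ δ : Finset (Finset Square)) : Prop :=
  ∀ (c d : ℤ) (i j : ℕ) (ta tb ua ub : Finset Square),
    IsNthTile γ c i ta → IsNthTile γ d j tb → IsNthTile δ c i ua → IsNthTile δ d j ub →
    (TilePrec ta tb ↔ TilePrec ua ub)

lemma SameOrientation.symm {γ δ : Finset (Finset Square)} (h : SameOrientation γ δ) :
    SameOrientation δ γ :=
  fun c d i j ta tb ua ub h₁ h₂ h₃ h₄ => (h c d i j ua ub ta tb h₃ h₄ h₁ h₂).symm

def LabelsAgreeBefore (R : Finset Square) (γ δ : Finset (Finset Square)) (s : Square) : Prop :=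
  ∀ q ∈ R, (q.1 + q.2 < s.1 + s.2 ∨ q.1 + q.2 = s.1 + s.2 ∧ q.1 < s.1) →
    label γ q = label δ q

namespace LabelsAgreeBefore

variable {n : ℕ} {R : Finset Square} {γ δ : Finset (Finset Square)} {s : Square}

lemma symm (H : LabelsAgreeBefore R γ δ s) : LabelsAgreeBefore R δ γ s :=
  fun q hq h => (H q hq h).symm

lemma rootsLeftOf_eq (H : LabelsAgreeBefore R γ δ s) :
    rootsLeftOf R γ (s.1 + s.2) s.1 = rootsLeftOf R δ (s.1 + s.2) s.1 :=
  filter_congr fun q hq => and_congr_right fun hql => and_congr_right fun hqx => by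
    rw [show tileLevel (tileOf γ q) = tileLevel (tileOf δ q) from
      congrArg Prod.fst (H q hq (by omega))]

lemma label_eq_of_root (hn : 0 < n) (hγ : IsRibbonTiling n R γ) (hδ : IsRibbonTiling n R δ)
    (hs : s ∈ R) (H : LabelsAgreeBefore R γ δ s) (hγs : tileLevel (tileOf γ s) = s.1 + s.2)
    (hδs : tileLevel (tileOf δ s) = s.1 + s.2) : label γ s = label δ s := by
  refine Prod.ext (hγs.trans hδs.symm) ?_
  change rank γ (tileOf γ s) = rank δ (tileOf δ s)
  rw [rank_tileOf_eq_card_rootsLeftOf hn hγ hs hγs,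
    rank_tileOf_eq_card_rootsLeftOf hn hδ hs hδs, H.rootsLeftOf_eq]

/-- If the `γ`-tile of `s` enters `s` from the left, the `δ`-tile of that square has the same
label and must continue to `s` as well: continuing upwards instead, it would give the square
above-left of `s` the label of `s` in `γ`, i.e. put it in the `γ`-tile of `s`. -/
lemma label_eq_of_left_mem (hn : 0 < n) (hγ : IsRibbonTiling n R γ)
    (hδ : IsRibbonTiling n R δ) (hs : s ∈ R) (H : LabelsAgreeBefore R γ δ s)
    (hleft : (s.1 - 1, s.2) ∈ tileOf γ s) : label γ s = label δ s := by
  have ht := tileOf_mem hγ hs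
  have hpR := hγ.subset ht hleft
  have hu := tileOf_mem hδ hpR
  have hp : label δ (s.1 - 1, s.2) = label γ s :=
    (H _ hpR (by dsimp only; omega)).symm.trans (label_eq_label hγ ht hleft (mem_tileOf hγ hs))
  obtain ⟨g, h⟩ := hγ.exists_isStaircase hn ht
  obtain ⟨g', h'⟩ := hδ.exists_isStaircase hn hu
  have hsl := h.level_mem (mem_tileOf hγ hs)
  rw [show tileLevel (tileOf δ (s.1 - 1, s.2)) = tileLevel (tileOf γ s) from
    congrArg Prod.fst hp] at h'
  rcases h'.succ_mem (mem_tileOf hδ hpR) (by dsimp only; omega) with hright | hup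
  · rw [show ((s.1 - 1, s.2) : Square).1 + 1 = s.1 by simp] at hright
    rw [← hp, label_eq_label hδ hu hright (mem_tileOf hδ hpR)]
  · exfalso
    have hqR := hδ.subset hu hup
    have hq : label γ (s.1 - 1, s.2 + 1) = label γ s := by
      rw [H _ hqR (by dsimp only; omega), label_eq_label hδ hu hup (mem_tileOf hδ hpR), hp]
    have hqt := tileOf_eq_of_label_eq hn hγ hqR hs hq ▸ mem_tileOf hγ hqR
    have := h.eq_of_level_eq hqt (mem_tileOf hγ hs) (by dsimp only; ring)
    simp [Prod.ext_iff] at this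

/-- The tile exists since both tilings have equally many tiles of each level; its lowest square
is right of `s` because the squares left of `s` are lowest squares of tiles alike in both. -/
lemma exists_tile_right_of_root (hn : 0 < n) (hγ : IsRibbonTiling n R γ)
    (hδ : IsRibbonTiling n R δ) (hs : s ∈ R) (H : LabelsAgreeBefore R γ δ s)
    (hγs : tileLevel (tileOf γ s) ≠ s.1 + s.2) (hδs : tileLevel (tileOf δ s) = s.1 + s.2) :
    ∃ t ∈ γ, tileLabel γ t = label δ s ∧
      ∃ g, IsStaircase n t (s.1 + s.2) g ∧ s.1 < g (s.1 + s.2) := by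
  have hcount : rank δ (tileOf δ s) < levelCount γ (s.1 + s.2) := by
    rw [levelCount_eq hn hγ hδ, ← hδs]
    exact rank_lt_levelCount (tileOf_mem hδ hs)
  obtain ⟨t, ht, htl⟩ := exists_tileLabel_eq hn hγ hcount
  have hl : tileLevel t = s.1 + s.2 := congrArg Prod.fst htl
  have hrank : rank γ t = rank δ (tileOf δ s) := congrArg Prod.snd htl
  obtain ⟨g, h⟩ := hγ.exists_isStaircase hn ht
  rw [hl] at h
  refine ⟨t, ht, htl.trans (Prod.ext hδs.symm rfl), g, h, lt_of_not_ge fun hle => ?_⟩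
  rcases hle.lt_or_eq with hlt | heq
  · have := card_rootsLeftOf_lt hn hγ ht hl h hlt
    rw [← rank_eq_card_rootsLeftOf hn hγ ht hl h, H.rootsLeftOf_eq,
      ← rank_tileOf_eq_card_rootsLeftOf hn hδ hs hδs] at this
    omega
  · have hst : s ∈ t := by
      convert h.mk_mem le_rfl (by omega) using 1
      ext <;> simp [heq]
    exact hγs (tileOf_eq hγ ht hst ▸ hl)

/-- If the `γ`-tile `t` of `s` enters `s` from below while `s` is the lowest square of its
`δ`-tile `u`, then the `δ`-tile `u'` with the label of `t` passes just right of `s`, so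
`u ≺ u'`; but the `γ`-tile with the label of `u` lies to the right of `t`. -/
lemma tileLevel_ne_of_below_mem (hn : 0 < n) (hγ : IsRibbonTiling n R γ)
    (hδ : IsRibbonTiling n R δ) (hor : SameOrientation γ δ) (hs : s ∈ R)
    (H : LabelsAgreeBefore R γ δ s) (hbelow : (s.1, s.2 - 1) ∈ tileOf γ s) :
    tileLevel (tileOf δ s) ≠ s.1 + s.2 := by
  intro hδs
  have ht := tileOf_mem hγ hs
  have hpR := hγ.subset ht hbelow
  have hu' := tileOf_mem hδ hpR
  have hp : label δ (s.1, s.2 - 1) = label γ s :=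
    (H _ hpR (by dsimp only; omega)).symm.trans (label_eq_label hγ ht hbelow (mem_tileOf hγ hs))
  obtain ⟨g, h⟩ := hγ.exists_isStaircase hn ht
  obtain ⟨g', h'⟩ := hδ.exists_isStaircase hn hu'
  have hsl := h.level_mem (mem_tileOf hγ hs)
  have hpl := h.level_mem hbelow
  have hlevel : tileLevel (tileOf δ (s.1, s.2 - 1)) = tileLevel (tileOf γ s) :=
    congrArg Prod.fst hp
  rw [hlevel] at h'
  obtain ⟨t', ht', ht'l, g'', h'', hx⟩ :=
    exists_tile_right_of_root hn hγ hδ hs H (by dsimp only at hpl; omega) hδs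
  rcases h'.succ_mem (mem_tileOf hδ hpR) (by dsimp only at hpl ⊢; omega) with hright | hup
  · have hprec : TilePrec (tileOf δ s) (tileOf δ (s.1, s.2 - 1)) :=
      ⟨s, mem_tileOf hδ hs, _, hright, Or.inl ⟨by dsimp only; ring, by dsimp only; omega⟩⟩
    have hiff := hor _ _ _ _ t' (tileOf γ s) (tileOf δ s) (tileOf δ (s.1, s.2 - 1))
      (isNthTile_iff.2 ⟨ht', ht'l⟩) (isNthTile_iff.2 ⟨ht, rfl⟩)
      (isNthTile_iff.2 ⟨tileOf_mem hδ hs, rfl⟩) (isNthTile_iff.2 ⟨hu', hp⟩)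
    have hne : tileOf γ s ≠ t' := by
      rintro rfl
      have := congrArg Prod.fst ht'l
      simp only [tileLabel, label] at this
      omega
    refine h.not_tilePrec h'' (hγ.disjoint ht ht' hne) (by omega) hsl.2 ?_ (hiff.2 hprec)
    rw [← h.fst_eq (mem_tileOf hγ hs)]
    exact hx
  · rw [show ((s.1, s.2 - 1) : Square).2 + 1 = s.2 by simp] at hup
    have := tileOf_eq hδ hu' hup
    rw [this, hlevel] at hδs
    omega

end LabelsAgreeBefore

section Reconstruction

variable {n : ℕ} {R : Finset Square} {γ δ : Finset (Finset Square)}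

lemma LabelsAgreeBefore.label_eq (hn : 0 < n) (hγ : IsRibbonTiling n R γ)
    (hδ : IsRibbonTiling n R δ) (hor : SameOrientation γ δ) {s : Square} (hs : s ∈ R)
    (H : LabelsAgreeBefore R γ δ s) : label γ s = label δ s := by
  rcases root_or_pred_mem_tileOf hn hγ hs with hγr | hγl | hγb
  · rcases root_or_pred_mem_tileOf hn hδ hs with hδr | hδl | hδb
    · exact H.label_eq_of_root hn hγ hδ hs hγr hδr
    · exact (H.symm.label_eq_of_left_mem hn hδ hγ hs hδl).symm
    · exact absurd hγr (H.symm.tileLevel_ne_of_below_mem hn hδ hγ hor.symm hs hδb)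
  · exact H.label_eq_of_left_mem hn hγ hδ hs hγl
  · rcases root_or_pred_mem_tileOf hn hδ hs with hδr | hδl | hδb
    · exact absurd hδr (H.tileLevel_ne_of_below_mem hn hγ hδ hor hs hγb)
    · exact (H.symm.label_eq_of_left_mem hn hδ hγ hs hδl).symm
    · have hpR := hγ.subset (tileOf_mem hγ hs) hγb
      rw [label_eq_label hγ (tileOf_mem hγ hs) (mem_tileOf hγ hs) hγb,
        H _ hpR (by dsimp only; omega),
        label_eq_label hδ (tileOf_mem hδ hs) hδb (mem_tileOf hδ hs)]

lemma label_eq_of_sameOrientation (hn : 0 < n) (hγ : IsRibbonTiling n R γ)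
    (hδ : IsRibbonTiling n R δ) (hor : SameOrientation γ δ) :
    ∀ s ∈ R, label γ s = label δ s := by
  by_contra! hbad
  obtain ⟨s, hs, hmin⟩ := exists_min_image {s ∈ R | label γ s ≠ label δ s}
    (fun q : Square => toLex (q.1 + q.2, q.1))
    (by obtain ⟨s, hs, h⟩ := hbad; exact ⟨s, mem_filter.2 ⟨hs, h⟩⟩)
  obtain ⟨hsR, hne⟩ := mem_filter.1 hs
  refine hne (LabelsAgreeBefore.label_eq hn hγ hδ hor hsR fun q hq hlt => ?_)
  by_contra hq'
  have := hmin q (mem_filter.2 ⟨hq, hq'⟩)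
  rw [Prod.Lex.toLex_le_toLex] at this
  omega

lemma subset_of_label_eq (hn : 0 < n) (hγ : IsRibbonTiling n R γ) (hδ : IsRibbonTiling n R δ)
    (h : ∀ s ∈ R, label γ s = label δ s) : γ ⊆ δ := by
  intro t ht
  obtain ⟨s, hs⟩ : t.Nonempty := card_pos.1 ((hγ.1 t ht).2.1 ▸ hn)
  have hsR := hγ.subset ht hs
  have hsub : t ⊆ tileOf δ s := fun q hq => by
    have hqR := hγ.subset ht hq
    rw [← tileOf_eq_of_label_eq hn hδ hqR hsR
      (by rw [← h q hqR, ← h s hsR, label_eq_label hγ ht hq hs])]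
    exact mem_tileOf hδ hqR
  have hcard : #(tileOf δ s) ≤ #t := by
    rw [(hδ.1 _ (tileOf_mem hδ hsR)).2.1, (hγ.1 t ht).2.1]
  rw [eq_of_subset_of_card_le hsub hcard]
  exact tileOf_mem hδ hsR

end Reconstruction

theorem ribbon_tiling_determined_by_orientation_general
    (n : ℕ) (hn : 2 ≤ n) (R : Finset Square)
    (α β : Finset (Finset Square))
    (hα : IsRibbonTiling n R α) (hβ : IsRibbonTiling n R β)
    (horTT : ∀ (c d : ℤ) (i j : ℕ) (ta tb ua ub : Finset Square),
      IsNthTile α c i ta → IsNthTile α d j tb →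
      IsNthTile β c i ua → IsNthTile β d j ub →
      (TilePrec ta tb ↔ TilePrec ua ub)) :
    α = β := by
  have hpos : 0 < n := by omega
  have hlabel := label_eq_of_sameOrientation hpos hα hβ horTT
  exact (subset_of_label_eq hpos hα hβ hlabel).antisymm
    (subset_of_label_eq hpos hβ hα fun s hs => (hlabel s hs).symm)

/-- If `α` and `β` are order-`n` ribbon tilings of a simply
connected region `R` inducing the same orientation of `G_R` (that is,
`t_{c,i}(α) ≺ t_{d,j}(α)` iff `t_{c,i}(β) ≺ t_{d,j}(β)` for all pairs of tile
indices, and similarly for all edges involving boundary squares), then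
`α = β`. -/
theorem ribbon_tiling_determined_by_orientation
    (n : ℕ) (hn : 2 ≤ n) (R : Finset Square)
    (hreg : IsRegion R) (hsc : SimplyConnectedSq ↑R)
    (α β : Finset (Finset Square))
    (hα : IsRibbonTiling n R α) (hβ : IsRibbonTiling n R β)
    (horTT : ∀ (c d : ℤ) (i j : ℕ) (ta tb ua ub : Finset Square),
      IsNthTile α c i ta → IsNthTile α d j tb →
      IsNthTile β c i ua → IsNthTile β d j ub →
      (TilePrec ta tb ↔ TilePrec ua ub))
    (horTS : ∀ (c : ℤ) (i : ℕ) (ta ua : Finset Square),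
      IsNthTile α c i ta → IsNthTile β c i ua →
      ∀ b ∈ boundarySet R,
        (TilePrec ta {b} ↔ TilePrec ua {b}) ∧
        (TilePrec {b} ta ↔ TilePrec {b} ua)) :
    α = β :=
  ribbon_tiling_determined_by_orientation_general n hn R α β hα hβ horTT
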